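/- Fix α ∈ (1/3, 1/2) and β ∈ (1−α, 2α), let Δ > 0 and let q ≥ 1 be an integer. Let X_1, …, X_q, Y_1, …, Y_q be mutually independent random variables, each with law N(0, Δ), and set S = Σ_{r=1}^q X_r Y_r. Then for every θ' ∈ (0, 1/4): P( S > q^β Δ^{2α} ) ≤ exp( −θ'·q^{β−1/2}·Δ^{2α−1} + 1 ). -/

import Mathlib

/-!
Chernoff's method with parameter `t = θ' / (√q Δ)`. Conditioning on `X`, the product `X Y` of
two independent `N(0, Δ)` variables has moment generating function
`E[exp (t² Δ X² / 2)] = (1 - t² Δ²)^(-1/2)`, so by independence of the `q` pairs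
`E[exp (t S)] = (1 - θ'² / q)^(-q/2) ≤ exp (θ'² / (2 (1 - θ'² / q))) ≤ e`, and Markov's inequality
for `exp (t S)` gives the bound.
-/

open MeasureTheory ProbabilityTheory Real
open scoped NNReal ENNReal

namespace ProbabilityTheory

section Gaussian

variable {v : ℝ≥0}

lemma integral_exp_mul_sq_gaussianReal {c : ℝ} (hc : 2 * c * v < 1) :
    ∫ x, exp (c * x ^ 2) ∂gaussianReal 0 v = (√(1 - 2 * c * v))⁻¹ := by
  rcases eq_or_ne v 0 with rfl | hv
  · simp [gaussianReal_zero_var]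
  have hv' : (0 : ℝ) < v := by positivity
  set b := (1 - 2 * c * v) / (2 * v) with hb
  have hdensity : ∀ x, gaussianPDFReal 0 v x • exp (c * x ^ 2) =
      (√(2 * π * v))⁻¹ * exp (-b * x ^ 2) := fun x => by
    rw [gaussianPDFReal, smul_eq_mul, mul_assoc, ← exp_add]
    congr 2
    rw [hb]
    field_simp
    ring
  have hsqrt : √(π / b) = √(2 * π * v) / √(1 - 2 * c * v) := by
    rw [← sqrt_div' _ (by linarith), hb]
    congr 1
    field_simp
  rw [integral_gaussianReal_eq_integral_smul hv]
  simp_rw [hdensity]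
  rw [integral_const_mul, integral_gaussian, hsqrt]
  have : 0 < √(2 * π * v) := by positivity
  field_simp

lemma integrable_exp_mul_sq_gaussianReal {c : ℝ} (hc : 2 * c * v < 1) :
    Integrable (fun x => exp (c * x ^ 2)) (gaussianReal 0 v) :=
  .of_integral_ne_zero <| by
    rw [integral_exp_mul_sq_gaussianReal hc]
    exact (inv_pos.2 (sqrt_pos.2 (by linarith))).ne'

lemma integral_exp_mul_gaussianReal (s : ℝ) :
    ∫ x, exp (s * x) ∂gaussianReal 0 v = exp (v * s ^ 2 / 2) := by
  simpa [mgf] using congrFun (mgf_id_gaussianReal (μ := 0) (v := v)) s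

lemma mgf_mul_gaussianReal_prod {t : ℝ} (ht : t ^ 2 * v ^ 2 < 1) :
    mgf (fun p : ℝ × ℝ => p.1 * p.2) ((gaussianReal 0 v).prod (gaussianReal 0 v)) t =
      (√(1 - t ^ 2 * v ^ 2))⁻¹ := by
  have hc : 2 * (v * t ^ 2 / 2) * v < 1 := by nlinarith
  have hinner : ∀ x, ∫ y, exp (t * (x * y)) ∂gaussianReal 0 v = exp (v * t ^ 2 / 2 * x ^ 2) :=
    fun x => by
      simp_rw [← mul_assoc]
      rw [integral_exp_mul_gaussianReal]
      ring_nf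
  have hint : Integrable (fun p : ℝ × ℝ => exp (t * (p.1 * p.2)))
      ((gaussianReal 0 v).prod (gaussianReal 0 v)) := by
    rw [integrable_prod_iff (by fun_prop)]
    refine ⟨.of_forall fun x => ?_, ?_⟩
    · simp_rw [← mul_assoc]
      exact integrable_exp_mul_gaussianReal _
    · simp_rw [norm_of_nonneg (exp_pos _).le, hinner]
      exact integrable_exp_mul_sq_gaussianReal hc
  rw [mgf, integral_prod _ hint]
  simp_rw [hinner]
  rw [integral_exp_mul_sq_gaussianReal hc]
  ring_nf

end Gaussian

lemma iIndepFun.prodMk_sumElim {ι Ω α : Type*} [Fintype ι] [MeasurableSpace Ω]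
    [MeasurableSpace α] {μ : Measure Ω} {X Y : ι → Ω → α} (h : iIndepFun (Sum.elim X Y) μ)
    (hX : ∀ i, AEMeasurable (X i) μ) (hY : ∀ i, AEMeasurable (Y i) μ) :
    iIndepFun (fun i ω => (X i ω, Y i ω)) μ := by
  have := h.isProbabilityMeasure
  have hXY : ∀ k, AEMeasurable (Sum.elim X Y k) μ := Sum.forall.2 ⟨hX, hY⟩
  have hpair : ∀ i, μ.map (fun ω => (X i ω, Y i ω)) = (μ.map (X i)).prod (μ.map (Y i)) :=
    fun i => (indepFun_iff_map_prod_eq_prod_map_map (hX i) (hY i)).1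
      (h.indepFun Sum.inl_ne_inr)
  let e := (MeasurableEquiv.sumPiEquivProdPi fun _ : ι ⊕ ι => α).trans
    (MeasurableEquiv.arrowProdEquivProdArrow α α ι).symm
  have he : (fun ω i => (X i ω, Y i ω)) = e ∘ fun ω k => Sum.elim X Y k ω := rfl
  rw [iIndepFun_iff_map_fun_eq_pi_map fun i => (hX i).prodMk (hY i), he,
    ← AEMeasurable.map_map_of_aemeasurable e.measurable.aemeasurable
      (aemeasurable_pi_lambda _ hXY), h.map_fun_eq_pi_map hXY]
  simp_rw [hpair]
  exact ((measurePreserving_sumPiEquivProdPi _).trans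
    (measurePreserving_arrowProdEquivProdArrow α α ι _ _).symm).map_eq

lemma mgf_sum_mul_of_gaussianReal {ι Ω : Type*} [Fintype ι] [MeasurableSpace Ω]
    {P : Measure Ω} {v : ℝ≥0} {X Y : ι → Ω → ℝ} (hIndep : iIndepFun (Sum.elim X Y) P)
    (hX : ∀ r, P.map (X r) = gaussianReal 0 v) (hY : ∀ r, P.map (Y r) = gaussianReal 0 v)
    {t : ℝ} (ht : t ^ 2 * v ^ 2 < 1) :
    mgf (fun ω => ∑ r, X r ω * Y r ω) P t = (√(1 - t ^ 2 * v ^ 2))⁻¹ ^ Fintype.card ι := by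
  have := hIndep.isProbabilityMeasure
  have hXm : ∀ r, AEMeasurable (X r) P :=
    fun r => .of_map_ne_zero (hX r ▸ IsProbabilityMeasure.ne_zero _)
  have hYm : ∀ r, AEMeasurable (Y r) P :=
    fun r => .of_map_ne_zero (hY r ▸ IsProbabilityMeasure.ne_zero _)
  have hprod : ∀ r, mgf (fun ω => X r ω * Y r ω) P t = (√(1 - t ^ 2 * v ^ 2))⁻¹ := fun r => by
    have hlaw : P.map (fun ω => (X r ω, Y r ω)) = (gaussianReal 0 v).prod (gaussianReal 0 v) := by
      rw [(indepFun_iff_map_prod_eq_prod_map_map (hXm r) (hYm r)).1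
        (hIndep.indepFun Sum.inl_ne_inr), hX r, hY r]
    rw [← mgf_mul_gaussianReal_prod ht, ← hlaw, mgf_map ((hXm r).prodMk (hYm r)) (by fun_prop)]
    rfl
  have hZ : iIndepFun (fun r ω => X r ω * Y r ω) P :=
    (hIndep.prodMk_sumElim hXm hYm).comp (fun _ p => p.1 * p.2) fun _ => by fun_prop
  have hsum : (fun ω => ∑ r, X r ω * Y r ω) = ∑ r, fun ω => X r ω * Y r ω := by
    ext; simp
  rw [hsum, hZ.mgf_sum₀ fun r => (hXm r).mul (hYm r)]
  simp [hprod]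

lemma measure_lt_le_exp_mul_mgf {Ω : Type*} [MeasurableSpace Ω] {μ : Measure Ω}
    [IsFiniteMeasure μ] {X : Ω → ℝ} {t : ℝ} (a : ℝ) (ht : 0 ≤ t) (hmgf : mgf X μ t ≠ 0) :
    μ {ω | a < X ω} ≤ ENNReal.ofReal (exp (-t * a) * mgf X μ t) := by
  calc μ {ω | a < X ω} ≤ μ {ω | a ≤ X ω} := measure_mono fun ω (h : a < X ω) => h.le
    _ = ENNReal.ofReal (μ.real {ω | a ≤ X ω}) := (ofReal_measureReal (measure_ne_top _ _)).symm
    _ ≤ _ := ENNReal.ofReal_le_ofReal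
      (measure_ge_le_exp_mul_mgf a ht (Integrable.of_integral_ne_zero hmgf))

end ProbabilityTheory

lemma inv_sqrt_one_sub_le_exp {x : ℝ} (hx : x < 1) : (√(1 - x))⁻¹ ≤ exp (x / (2 * (1 - x))) := by
  have h1x : 0 < 1 - x := by linarith
  rw [inv_le_iff_one_le_mul₀' (sqrt_pos.2 h1x), ← sqrt_sq (exp_pos _).le, ← sqrt_mul h1x.le,
    ← exp_nat_mul]
  refine one_le_sqrt.2 ?_
  calc (1 : ℝ) = (1 - x) * (x / (1 - x) + 1) := by field_simp; ring
    _ ≤ (1 - x) * exp (x / (1 - x)) := by gcongr; exact add_one_le_exp _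
    _ = _ := by push_cast; congr 2; field_simp

lemma inv_sqrt_one_sub_div_pow_le_exp_one {θ : ℝ} (hθ : θ ^ 2 ≤ 1 / 2) (q : ℕ) :
    (√(1 - θ ^ 2 / q))⁻¹ ^ q ≤ exp 1 := by
  obtain rfl | hq := q.eq_zero_or_pos
  · simp
  have hx : θ ^ 2 / q ≤ θ ^ 2 := div_le_self (sq_nonneg θ) (by exact_mod_cast hq)
  have hqx : q * (θ ^ 2 / q) = θ ^ 2 := by field_simp
  calc (√(1 - θ ^ 2 / q))⁻¹ ^ q ≤ exp (θ ^ 2 / q / (2 * (1 - θ ^ 2 / q))) ^ q := by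
        gcongr
        exact inv_sqrt_one_sub_le_exp (by linarith)
    _ = exp (θ ^ 2 / (2 * (1 - θ ^ 2 / q))) := by rw [← exp_nat_mul, ← mul_div_assoc, hqx]
    _ ≤ exp 1 := by
        gcongr
        rw [div_le_one (by linarith)]
        linarith

theorem chernoff_product_gaussians
    (α β : ℝ)
    (Δ : ℝ≥0) (hΔ : 0 < Δ) (q : ℕ) (hq : 1 ≤ q)
    {Ω : Type*} [MeasurableSpace Ω] (P : Measure Ω) [IsProbabilityMeasure P]
    (X Y : Fin q → Ω → ℝ)
    (hIndep : iIndepFun (Sum.elim X Y) P)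
    (hX : ∀ r, P.map (X r) = gaussianReal 0 Δ)
    (hY : ∀ r, P.map (Y r) = gaussianReal 0 Δ)
    (θ' : ℝ) (hθ1 : 0 < θ') (hθ2 : θ' < 1 / 4) :
    P {ω | (q : ℝ) ^ β * (Δ : ℝ) ^ (2 * α) < ∑ r, X r ω * Y r ω} ≤
      ENNReal.ofReal
        (Real.exp (-θ' * (q : ℝ) ^ (β - 1 / 2) * (Δ : ℝ) ^ (2 * α - 1) + 1)) := by
  have hq0 : (0 : ℝ) < q := by exact_mod_cast hq
  have hΔ0 : (0 : ℝ) < Δ := hΔ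
  set t := θ' / (√q * Δ) with ht
  have htΔ : t ^ 2 * Δ ^ 2 = θ' ^ 2 / q := by
    rw [ht, div_pow, mul_pow, sq_sqrt hq0.le]
    field_simp
  have hta : t * ((q : ℝ) ^ β * (Δ : ℝ) ^ (2 * α)) =
      θ' * (q : ℝ) ^ (β - 1 / 2) * (Δ : ℝ) ^ (2 * α - 1) := by
    rw [ht, rpow_sub hq0, rpow_sub_one hΔ0.ne', ← sqrt_eq_rpow]
    field_simp
  have hθ : θ' ^ 2 ≤ 1 / 2 := by nlinarith
  have hx : θ' ^ 2 / q < 1 :=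
    (div_le_self (sq_nonneg _) (by exact_mod_cast hq)).trans_lt (by linarith)
  have hmgf := mgf_sum_mul_of_gaussianReal hIndep hX hY (htΔ ▸ hx)
  rw [Fintype.card_fin, htΔ] at hmgf
  refine (measure_lt_le_exp_mul_mgf (t := t) _ (by positivity) (by rw [hmgf]; positivity)).trans
    (ENNReal.ofReal_le_ofReal ?_)
  rw [hmgf, neg_mul, hta, exp_add, ← neg_mul, ← neg_mul]
  gcongr
  exact inv_sqrt_one_sub_div_pow_le_exp_one hθ q
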